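/- For integers k ≥ 3 and l ≥ 2, the identity l·k^{-(k+l+1)}·∫_{x=0}^{k}∫_{y=0}^{k+l-x}(x-(k-1))·x^{k-1}·y^{l-1} dy dx = Σ_{j=0}^{l} C(l,j)·(l^{l-j}/k^{l-j+1})·((k-1)!·j!/(k+j+1)!)·(j·(1-k)+1) holds, where C(l,j) denotes the binomial coefficient. -/

import Mathlib

/-!
Integrating out `y` turns `l` times the double integral into
`∫₀ᵏ (x - (k-1)) x^(k-1) (k + l - x)^l dx`. Expanding `(k + l - x)^l = ∑ C(l,j) l^(l-j) (k - x)^j`,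
each term is a combination of the two Beta integrals `∫₀ᵏ x^m (k - x)^j dx` with `m = k, k - 1`,
where `∫₀ᶜ x^m (c - x)^j dx = c^(m+j+1) m! j! / (m+j+1)!`; over a common denominator they leave
the factor `k·k - (k-1)(k+j+1) = j(1-k) + 1`.
-/

open intervalIntegral

theorem integral_pow_mul_sub_pow_succ (m j : ℕ) (c : ℝ) :
    (m + 1) * ∫ x in (0:ℝ)..c, x ^ m * (c - x) ^ (j + 1)
      = (j + 1) * ∫ x in (0:ℝ)..c, x ^ (m + 1) * (c - x) ^ j := by
  have hu : ∀ x ∈ Set.uIcc 0 c, HasDerivAt (fun x : ℝ => x ^ (m + 1)) ((m + 1) * x ^ m) x :=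
    fun x _ => by simpa using hasDerivAt_pow (m + 1) x
  have hv : ∀ x ∈ Set.uIcc 0 c,
      HasDerivAt (fun x => (c - x) ^ (j + 1)) (-((j + 1) * (c - x) ^ j)) x := fun x _ => by
    simpa using ((hasDerivAt_id x).const_sub c).fun_pow (j + 1)
  -- `x^(m+1) (c-x)^(j+1)` vanishes at both ends of `[0, c]`
  have ibp := integral_deriv_mul_eq_sub hu hv
    (by apply Continuous.intervalIntegrable; fun_prop)
    (by apply Continuous.intervalIntegrable; fun_prop)
  simp only [sub_self, ne_eq, Nat.add_one_ne_zero, not_false_eq_true, zero_pow, mul_zero,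
    zero_mul, sub_zero] at ibp
  rw [← integral_const_mul, ← integral_const_mul, ← sub_eq_zero, ← integral_sub, ← ibp]
  · congr 1; ext x; ring
  all_goals apply Continuous.intervalIntegrable; fun_prop

theorem integral_pow_mul_sub_pow (m j : ℕ) (c : ℝ) :
    ∫ x in (0:ℝ)..c, x ^ m * (c - x) ^ j
      = c ^ (m + j + 1) * (m.factorial * j.factorial) / (m + j + 1).factorial := by
  induction j generalizing m with
  | zero =>
    simp [integral_pow, Nat.factorial_succ, field]
  | succ j ih =>
    apply mul_left_cancel₀ (by positivity : (m:ℝ) + 1 ≠ 0)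
    rw [integral_pow_mul_sub_pow_succ, ih, show m + 1 + j + 1 = m + (j + 1) + 1 by ring,
      Nat.factorial_succ m, Nat.factorial_succ j]
    push_cast
    field_simp

theorem integral_sub_mul_pow_mul_sub_pow (a c : ℝ) (m j : ℕ) :
    ∫ x in (0:ℝ)..c, (x - a) * x ^ m * (c - x) ^ j
      = c ^ (m + j + 1) * (m.factorial * j.factorial) / (m + j + 2).factorial
        * (c * (m + 1) - a * (m + j + 2)) := by
  have hsplit : ∀ x : ℝ, (x - a) * x ^ m * (c - x) ^ j
      = x ^ (m + 1) * (c - x) ^ j - a * (x ^ m * (c - x) ^ j) := fun x => by ring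
  simp only [hsplit]
  rw [integral_sub (by apply Continuous.intervalIntegrable; fun_prop)
      (by apply Continuous.intervalIntegrable; fun_prop),
    integral_const_mul, integral_pow_mul_sub_pow, integral_pow_mul_sub_pow,
    show m + 1 + j + 1 = m + j + 1 + 1 by ring, Nat.factorial_succ (m + j + 1),
    Nat.factorial_succ m]
  push_cast
  field_simp
  ring

theorem integral_pow_sub_one (l : ℕ) (hl : 1 ≤ l) (b : ℝ) :
    ∫ y in (0:ℝ)..b, y ^ (l - 1) = b ^ l / l := by
  obtain ⟨n, rfl⟩ := Nat.exists_eq_add_of_le' hl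
  simp [integral_pow]

theorem stmt_7 (k l : ℕ) (hk : 3 ≤ k) (hl : 2 ≤ l) :
    (l:ℝ) * ((k:ℝ) ^ (k + l + 1))⁻¹ *
      ∫ x in (0:ℝ)..(k:ℝ), ∫ y in (0:ℝ)..((k:ℝ) + l - x),
        (x - ((k:ℝ) - 1)) * x ^ (k - 1) * y ^ (l - 1)
    = ∑ j ∈ Finset.range (l + 1),
        (l.choose j : ℝ) * ((l:ℝ) ^ (l - j) / (k:ℝ) ^ (l - j + 1)) *
          (((k - 1).factorial : ℝ) * (j.factorial : ℝ) / ((k + j + 1).factorial : ℝ)) *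
          ((j:ℝ) * (1 - (k:ℝ)) + 1) := by
  have hk1 : ((k - 1 : ℕ) : ℝ) = k - 1 := by rw [Nat.cast_pred (by omega)]
  have hexpand : ∀ x : ℝ, (x - (k - 1)) * x ^ (k - 1) * (k + l - x) ^ l
      = ∑ j ∈ Finset.range (l + 1), (l.choose j * (l:ℝ) ^ (l - j))
          * ((x - (k - 1)) * x ^ (k - 1) * (k - x) ^ j) := fun x => by
    rw [show (k:ℝ) + l - x = (k - x) + l by ring, add_pow, Finset.mul_sum]
    exact Finset.sum_congr rfl fun j _ => by ring
  have hinner : (l:ℝ) * ∫ x in (0:ℝ)..k, ∫ y in (0:ℝ)..(k + l - x),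
        (x - (k - 1)) * x ^ (k - 1) * y ^ (l - 1)
      = ∫ x in (0:ℝ)..k, ∑ j ∈ Finset.range (l + 1), (l.choose j * (l:ℝ) ^ (l - j))
          * ((x - (k - 1)) * x ^ (k - 1) * (k - x) ^ j) := by
    rw [← integral_const_mul]
    congr 1; ext x
    rw [integral_const_mul, integral_pow_sub_one l (by omega), ← hexpand]
    field_simp
  rw [mul_right_comm, hinner,
    integral_finsetSum fun j _ => (by fun_prop : Continuous _).intervalIntegrable _ _,
    Finset.sum_mul]
  refine Finset.sum_congr rfl fun j hj => ?_
  have hjl : j ≤ l := Nat.lt_succ_iff.mp (Finset.mem_range.mp hj)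
  rw [integral_const_mul, integral_sub_mul_pow_mul_sub_pow,
    show k - 1 + j + 1 = k + j by omega, show k - 1 + j + 2 = k + j + 1 by omega,
    show k + l + 1 = (k + j) + (l - j + 1) by omega, pow_add, hk1]
  field_simp
  ring
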